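/- Let f : ℝ^d → ℝ be locally Lipschitz and suppose the Clarke subdifferential map w ↦ ∂f(w) is upper semicontinuous. If dist(0, ∂f(x)) = ω > 0, then there exists ω₂ > 0 such that dist(0, ∂_{ω₂} f(x)) ≥ ω/2, where ∂_ε f(x) = co{∂f(x̂) : x̂ ∈ x + B(ε)}. -/
import Mathlib


open Metric Pointwise

theorem eps_subdifferential_dist_lower_bound
    {d : ℕ} (f : EuclideanSpace ℝ (Fin d) → ℝ)
    (hf : LocallyLipschitz f)
    (Df : EuclideanSpace ℝ (Fin d) → Set (EuclideanSpace ℝ (Fin d)))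
    (hne : ∀ x, (Df x).Nonempty)
    (hcpt : ∀ x, IsCompact (Df x))
    (hconv : ∀ x, Convex ℝ (Df x))
    (husc : ∀ x, ∀ ω₁ > (0 : ℝ), ∃ ω₂ > (0 : ℝ),
      ∀ xh ∈ closedBall x ω₂, Df xh ⊆ Df x + closedBall (0 : EuclideanSpace ℝ (Fin d)) ω₁)
    (x : EuclideanSpace ℝ (Fin d)) (ω : ℝ)
    (hω : infDist 0 (Df x) = ω) (hωpos : 0 < ω) :
    ∃ ω₂ > (0 : ℝ),
      ω / 2 ≤ infDist 0 (convexHull ℝ (⋃ xh ∈ closedBall x ω₂, Df xh)) := by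
  obtain ⟨ω₂, hω₂pos, hsub⟩ := husc x (ω / 2) (by linarith)
  refine ⟨ω₂, hω₂pos, ?_⟩
  set S := Df x + closedBall (0 : EuclideanSpace ℝ (Fin d)) (ω / 2) with hS
  have hSconv : Convex ℝ S := (hconv x).add (convex_closedBall _ _)
  have hsubset : (⋃ xh ∈ closedBall x ω₂, Df xh) ⊆ S := by
    intro y hy
    simp only [Set.mem_iUnion] at hy
    obtain ⟨xh, hxh, hyD⟩ := hy
    exact hsub xh hxh hyD
  have hhull : convexHull ℝ (⋃ xh ∈ closedBall x ω₂, Df xh) ⊆ S :=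
    convexHull_min hsubset hSconv
  have hne' : (convexHull ℝ (⋃ xh ∈ closedBall x ω₂, Df xh)).Nonempty := by
    obtain ⟨a, ha⟩ := hne x
    exact ⟨a, subset_convexHull ℝ _ (Set.mem_biUnion (mem_closedBall_self hω₂pos.le) ha)⟩
  rw [← not_lt, infDist_lt_iff hne']
  rintro ⟨y, hy, hlt⟩
  obtain ⟨a, ha, b, hb, rfl⟩ := hhull hy
  have h1 : ω ≤ dist 0 a := hω ▸ infDist_le_dist_of_mem ha
  have h2 : ‖b‖ ≤ ω / 2 := by simpa using hb
  have h3 : ‖a‖ ≤ ‖a + b‖ + ‖b‖ := norm_le_add_norm_add a b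
  have h4 : dist 0 a = ‖a‖ := by simp
  have h5 : dist (0 : EuclideanSpace ℝ (Fin d)) (a + b) = ‖a + b‖ := by simp
  linarith
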